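/- arXiv:1808.06666 — 3 statements merged into one kernel-verified Lean document; each statement's English description precedes it below -/
import Mathlib

section
/- Let G be a bipartite graph with parts X and Y, and let I be a maximal independent set of G. Then there exists an irredundant set J ⊆ I ∩ X with N(J) = N(I ∩ X); in fact, any J ⊆ I ∩ X that is minimal subject to N(J) = N(I ∩ X) is irredundant. Moreover, for any maximal independent set I, N(I ∩ X) = Y \ I. -/
/-- A set of vertices is independent in `G` if it spans no edge. -/
def IsIndepSet {V : Type*} (G : SimpleGraph V) (s : Set V) : Prop :=
  ∀ ⦃x⦄, x ∈ s → ∀ ⦃y⦄, y ∈ s → ¬ G.Adj x y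

/-- A maximal independent set. -/
def IsMaxIndepSet {V : Type*} (G : SimpleGraph V) (s : Set V) : Prop :=
  IsIndepSet G s ∧ ∀ t, IsIndepSet G t → s ⊆ t → s = t

/-- `mis G` is the number of maximal independent sets of `G`. -/
noncomputable def mis {V : Type*} (G : SimpleGraph V) : ℕ :=
  Nat.card {s : Set V // IsMaxIndepSet G s}

/-- `S` induces a triangle matching: within `S`, every vertex has exactly two
neighbours, and these two neighbours are adjacent; so `G[S]` is a vertex-disjoint
union of triangles. -/
def IsInducedTriangleMatching {V : Type*} (G : SimpleGraph V) (S : Finset V) : Prop :=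
  ∀ x ∈ S, ∃ y ∈ S, ∃ z ∈ S, G.Adj x y ∧ G.Adj x z ∧ G.Adj y z ∧
    ∀ w ∈ S, G.Adj x w → w = y ∨ w = z

/-- `itm G`: the largest number of triangles in an induced triangle matching. -/
noncomputable def itm {V : Type*} (G : SimpleGraph V) : ℕ :=
  sSup {k | ∃ S : Finset V, S.card = 3 * k ∧ IsInducedTriangleMatching G S}

/-- `S` induces a matching: within `S`, every vertex has exactly one neighbour. -/
def IsInducedMatching {V : Type*} (G : SimpleGraph V) (S : Finset V) : Prop :=
  ∀ x ∈ S, ∃ y ∈ S, G.Adj x y ∧ ∀ z ∈ S, G.Adj x z → z = y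

/-- `im G`: the largest number of edges in an induced matching. -/
noncomputable def im {V : Type*} (G : SimpleGraph V) : ℕ :=
  sSup {k | ∃ S : Finset V, S.card = 2 * k ∧ IsInducedMatching G S}

/-- The neighbourhood of a set of vertices. -/
def nbhd {V : Type*} (G : SimpleGraph V) (S : Set V) : Set V :=
  {y | ∃ x ∈ S, G.Adj x y}

/-- A set `J` is irredundant if no member's neighbourhood is covered by the
neighbourhoods of the other members. -/
def Irredundant {V : Type*} (G : SimpleGraph V) (J : Set V) : Prop :=
  ∀ x ∈ J, ¬ (G.neighborSet x ⊆ nbhd G (J \ {x}))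

/-- `irr G X`: the number of irredundant subsets of `X`. -/
noncomputable def irr {V : Type*} (G : SimpleGraph V) (X : Set V) : ℕ :=
  Nat.card {J : Set V // J ⊆ X ∧ Irredundant G J}

/-! A set that is minimal among the subsets of `I ∩ X` with the same neighbourhood is irredundant,
since dropping a redundant vertex would not shrink the neighbourhood; such a minimal set exists
because `I ∩ X` is finite. For the neighbourhood itself: a vertex outside a maximal independent
set `I` has a neighbour in `I`, and a vertex inside has none, so `N(I) = Iᶜ`; in a bipartite graph
the neighbours of `I ∩ X` are exactly the neighbours of `I` lying in `Y`. -/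

section

variable {V : Type*} {G : SimpleGraph V}

lemma nbhd_diff_singleton_eq {J : Set V} {x : V} (hx : G.neighborSet x ⊆ nbhd G (J \ {x})) :
    nbhd G (J \ {x}) = nbhd G J := by
  ext y
  constructor
  · rintro ⟨a, ha, hay⟩
    exact ⟨a, ha.1, hay⟩
  · rintro ⟨a, ha, hay⟩
    by_cases hax : a = x
    · exact hx (hax ▸ hay)
    · exact ⟨a, ⟨ha, hax⟩, hay⟩

lemma irredundant_of_forall_subset_nbhd_eq {J : Set V}
    (hmin : ∀ J' ⊆ J, nbhd G J' = nbhd G J → J' = J) : Irredundant G J := by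
  intro x hx hred
  have hJ := hmin (J \ {x}) Set.sdiff_subset (nbhd_diff_singleton_eq hred)
  exact (hJ ▸ hx).2 rfl

lemma exists_irredundant_subset_nbhd_eq {S : Set V} (hS : S.Finite) :
    ∃ J ⊆ S, Irredundant G J ∧ nbhd G J = nbhd G S := by
  set F := {J | J ⊆ S ∧ nbhd G J = nbhd G S}
  have hF : F.Finite := hS.finite_subsets.subset fun _ hJ => hJ.1
  obtain ⟨J, -, hJ⟩ := hF.isPWO.exists_le_minimal (a := S) ⟨subset_rfl, rfl⟩
  refine ⟨J, hJ.prop.1, irredundant_of_forall_subset_nbhd_eq fun J' hJ' hN => ?_, hJ.prop.2⟩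
  exact hJ'.antisymm (hJ.le_of_le ⟨hJ'.trans hJ.prop.1, hN.trans hJ.prop.2⟩ hJ')

lemma IsMaxIndepSet.exists_adj_of_notMem {I : Set V} (hI : IsMaxIndepSet G I) {y : V}
    (hy : y ∉ I) : ∃ x ∈ I, G.Adj x y := by
  by_contra! hnone
  have hindep : IsIndepSet G (insert y I) := by
    rintro a (rfl | ha) b (rfl | hb)
    · exact G.irrefl
    · exact fun hab => hnone b hb hab.symm
    · exact hnone a ha
    · exact hI.1 ha hb
  exact hy ((hI.2 _ hindep (Set.subset_insert y I)) ▸ Set.mem_insert y I)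

lemma IsMaxIndepSet.nbhd_eq_compl {I : Set V} (hI : IsMaxIndepSet G I) : nbhd G I = Iᶜ := by
  ext y
  constructor
  · rintro ⟨x, hx, hxy⟩ hy
    exact hI.1 hx hy hxy
  · exact hI.exists_adj_of_notMem

lemma nbhd_inter_eq_of_bipartite {X Y : Set V} (hdisj : Disjoint X Y)
    (hbip : ∀ a b : V, G.Adj a b → (a ∈ X ∧ b ∈ Y) ∨ (a ∈ Y ∧ b ∈ X)) (S : Set V) :
    nbhd G (S ∩ X) = nbhd G S ∩ Y := by
  ext y
  constructor
  · rintro ⟨x, ⟨hxS, hxX⟩, hxy⟩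
    rcases hbip x y hxy with ⟨-, hyY⟩ | ⟨hxY, -⟩
    · exact ⟨⟨x, hxS, hxy⟩, hyY⟩
    · exact (hdisj.notMem_of_mem_left hxX hxY).elim
  · rintro ⟨⟨x, hxS, hxy⟩, hyY⟩
    rcases hbip x y hxy with ⟨hxX, -⟩ | ⟨-, hyX⟩
    · exact ⟨x, ⟨hxS, hxX⟩, hxy⟩
    · exact (hdisj.notMem_of_mem_left hyX hyY).elim

end

theorem maxIndep_irredundant_subset_general {V : Type*} (G : SimpleGraph V)
    (X Y : Finset V)
    (hdisj : Disjoint X Y)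
    (hbip : ∀ a b : V, G.Adj a b → (a ∈ X ∧ b ∈ Y) ∨ (a ∈ Y ∧ b ∈ X))
    (I : Set V) (hI : IsMaxIndepSet G I) :
    (∃ J ⊆ I ∩ ↑X, Irredundant G J ∧ nbhd G J = nbhd G (I ∩ ↑X)) ∧
    (∀ J ⊆ I ∩ ↑X, nbhd G J = nbhd G (I ∩ ↑X) →
      (∀ J' ⊆ J, nbhd G J' = nbhd G (I ∩ ↑X) → J' = J) → Irredundant G J) ∧
    nbhd G (I ∩ ↑X) = ↑Y \ I := by
  refine ⟨exists_irredundant_subset_nbhd_eq (X.finite_toSet.inter_of_right I), ?_, ?_⟩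
  · intro J _ hJ hmin
    exact irredundant_of_forall_subset_nbhd_eq fun J' hJ' hN => hmin J' hJ' (hN.trans hJ)
  · rw [nbhd_inter_eq_of_bipartite (Finset.disjoint_coe.mpr hdisj) hbip, hI.nbhd_eq_compl,
      Set.inter_comm, Set.sdiff_eq]

theorem maxIndep_irredundant_subset {V : Type*} [Fintype V] (G : SimpleGraph V)
    (X Y : Finset V)
    (hdisj : Disjoint X Y) (hcover : ∀ v : V, v ∈ X ∨ v ∈ Y)
    (hbip : ∀ a b : V, G.Adj a b → (a ∈ X ∧ b ∈ Y) ∨ (a ∈ Y ∧ b ∈ X))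
    (I : Set V) (hI : IsMaxIndepSet G I) :
    (∃ J ⊆ I ∩ ↑X, Irredundant G J ∧ nbhd G J = nbhd G (I ∩ ↑X)) ∧
    (∀ J ⊆ I ∩ ↑X, nbhd G J = nbhd G (I ∩ ↑X) →
      (∀ J' ⊆ J, nbhd G J' = nbhd G (I ∩ ↑X) → J' = J) → Irredundant G J) ∧
    nbhd G (I ∩ ↑X) = ↑Y \ I :=
  maxIndep_irredundant_subset_general G X Y hdisj hbip I hI
end

section
/- Let γ be the unique real solution of 1 + γ = γ³. For every n ≥ 3, the cycle C_n on n vertices satisfies mis(C_n) ≤ 3·γ^{n−3}. -/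
open Finset Fin.CommRing

/-!
A maximal independent set of `C_n`, read around the cycle as a `0/1`-word (`true` for a vertex
in the set), has no factor `11` (independence) and no factor `000` (maximality): it is a cyclic
concatenation of the blocks `10` and `100`. Cutting it open at vertex `0` or `1` when one of them
is in the set, and otherwise at vertex `2` (then `-1` is in the set and the word ends in `100`),
gives injections into the linear block words of length `n`, `n` and `n - 3`. Their number `b m`
satisfies `b (m + 3) ≤ b (m + 1) + b m`, hence so does `a k = 2 b (k + 3) + b k`; with
`a 0, a 1, a 2 = 3, 2, 5` and `γ ^ (k + 3) = γ ^ (k + 1) + γ ^ k` this gives `a k ≤ 3 γ ^ k`.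
-/

theorem IsMaxIndepSet.exists_adj_of_notMem_s8 {V : Type*} {G : SimpleGraph V} {S : Set V}
    (hS : IsMaxIndepSet G S) {v : V} (hv : v ∉ S) : ∃ w ∈ S, G.Adj v w := by
  by_contra! h
  have hindep : IsIndepSet G (insert v S) := by
    rintro x (rfl | hx) y (rfl | hy)
    · exact G.irrefl
    · exact h y hy
    · exact fun hxy => h x hx hxy.symm
    · exact hS.1 hx hy
  exact hv (hS.2 _ hindep (Set.subset_insert v S) ▸ Set.mem_insert v S)

def blockWords : ℕ → Finset (List Bool)
  | 0 => {[]}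
  | 1 => ∅
  | 2 => {[true, false]}
  | m + 3 => (blockWords (m + 1)).image (true :: false :: ·) ∪
      (blockWords m).image (true :: false :: false :: ·)

theorem card_blockWords_add_three_le (m : ℕ) :
    #(blockWords (m + 3)) ≤ #(blockWords (m + 1)) + #(blockWords m) :=
  (card_union_le _ _).trans (add_le_add card_image_le card_image_le)

theorem map_range'_mem_blockWords {f : ℕ → Bool} (h11 : ∀ i, f i = true → f (i + 1) = false)
    (h000 : ∀ i, f i = false → f (i + 1) = false → f (i + 2) = true) (m : ℕ) :
    ∀ s, f s = true → f (s + m) = true → (List.range' s m).map f ∈ blockWords m := by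
  induction m using Nat.strong_induction_on with
  | _ m ih =>
    intro s hs hsm
    have hs1 := h11 s hs
    match m with
    | 0 => simp [blockWords]
    | 1 => simp [hs1] at hsm
    | 2 => simp [blockWords, List.range'_succ, hs, hs1]
    | m + 3 =>
      cases hs2 : f (s + 2)
      · have hs3 : f (s + 3) = true := h000 (s + 1) hs1 hs2
        refine mem_union_right _ (mem_image.2 ⟨_, ih m (by omega) (s + 3) hs3 ?_, ?_⟩)
        · rwa [show s + 3 + m = s + (m + 3) by omega]
        · simp [List.range'_succ, hs, hs1, hs2, add_assoc]
      · refine mem_union_left _ (mem_image.2 ⟨_, ih (m + 1) (by omega) (s + 2) hs2 ?_, ?_⟩)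
        · rwa [show s + 2 + (m + 1) = s + (m + 3) by omega]
        · simp [List.range'_succ, hs, hs1, add_assoc]

section CyclicIndicator

variable {n : ℕ} [NeZero n]

open Classical in
noncomputable def cyclicIndicator (S : Set (Fin n)) (i : ℕ) : Bool := decide ((i : Fin n) ∈ S)

theorem cyclicIndicator_eq_true {S : Set (Fin n)} {i : ℕ} :
    cyclicIndicator S i = true ↔ (i : Fin n) ∈ S := by
  simp [cyclicIndicator]

theorem cyclicIndicator_eq_false {S : Set (Fin n)} {i : ℕ} :
    cyclicIndicator S i = false ↔ (i : Fin n) ∉ S := by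
  simp [cyclicIndicator]

theorem cyclicIndicator_add_self (S : Set (Fin n)) (i : ℕ) :
    cyclicIndicator S (i + n) = cyclicIndicator S i := by
  simp [cyclicIndicator]

theorem injective_map_range'_cyclicIndicator {s : ℕ} (hs : s ≤ n) :
    Function.Injective fun S : Set (Fin n) => (List.range' s n).map (cyclicIndicator S) := by
  intro S T hST
  rw [List.map_inj_left] at hST
  ext v
  obtain ⟨i, hi, hiv⟩ : ∃ i ∈ List.range' s n, (i : Fin n) = v := by
    simp only [List.mem_range'_1]
    by_cases hv : s ≤ v.val
    · exact ⟨v.val, ⟨hv, by omega⟩, by simp⟩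
    · exact ⟨v.val + n, ⟨by omega, by omega⟩, by simp⟩
  simpa only [cyclicIndicator_eq_true, hiv] using Bool.eq_iff_iff.1 (hST i hi)

end CyclicIndicator

section Cycle

variable {k : ℕ} {S : Set (Fin (k + 2))}

theorem IsIndepSet.cyclicIndicator_succ_eq_false
    (hS : IsIndepSet (SimpleGraph.cycleGraph (k + 2)) S) {i : ℕ}
    (hi : cyclicIndicator S i = true) : cyclicIndicator S (i + 1) = false := by
  rw [cyclicIndicator_eq_true] at hi
  refine cyclicIndicator_eq_false.2 fun hi1 => hS hi hi1 ?_
  rw [SimpleGraph.cycleGraph_adj]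
  right
  push_cast
  ring

theorem IsMaxIndepSet.cyclicIndicator_add_two_eq_true
    (hS : IsMaxIndepSet (SimpleGraph.cycleGraph (k + 2)) S) {i : ℕ}
    (hi : cyclicIndicator S i = false) (hi1 : cyclicIndicator S (i + 1) = false) :
    cyclicIndicator S (i + 2) = true := by
  rw [cyclicIndicator_eq_false] at hi hi1
  by_contra hi2
  rw [Bool.not_eq_true, cyclicIndicator_eq_false] at hi2
  obtain ⟨w, hw, hadj⟩ := hS.exists_adj_of_notMem_s8 hi1
  rw [← SimpleGraph.mem_neighborSet, SimpleGraph.cycleGraph_neighborSet] at hadj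
  rcases hadj with rfl | rfl
  · exact hi (by simpa using hw)
  · exact hi2 (by push_cast at hw ⊢; rwa [add_assoc, one_add_one_eq_two] at hw)

theorem IsMaxIndepSet.map_range'_cyclicIndicator_mem_blockWords
    (hS : IsMaxIndepSet (SimpleGraph.cycleGraph (k + 2)) S) {s m : ℕ}
    (hs : cyclicIndicator S s = true) (hsm : cyclicIndicator S (s + m) = true) :
    (List.range' s m).map (cyclicIndicator S) ∈ blockWords m :=
  map_range'_mem_blockWords (f := cyclicIndicator S)
    (fun _ h => hS.1.cyclicIndicator_succ_eq_false h)
    (fun _ h h1 => hS.cyclicIndicator_add_two_eq_true h h1) m s hs hsm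

theorem ncard_maxIndepSet_cycleGraph_mem_le {s : ℕ} (hs : s ≤ k + 2) :
    {S | IsMaxIndepSet (SimpleGraph.cycleGraph (k + 2)) S ∧ (s : Fin (k + 2)) ∈ S}.ncard ≤
      #(blockWords (k + 2)) := by
  rw [← Set.ncard_coe_finset]
  refine Set.ncard_le_ncard_of_injOn _ ?_ (injective_map_range'_cyclicIndicator hs).injOn
  rintro S ⟨hS, hsS⟩
  have hs' : cyclicIndicator S s = true := cyclicIndicator_eq_true.2 hsS
  exact hS.map_range'_cyclicIndicator_mem_blockWords hs' (by rwa [cyclicIndicator_add_self])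

end Cycle

theorem ncard_maxIndepSet_cycleGraph_zero_one_notMem_le (k : ℕ) :
    {S | IsMaxIndepSet (SimpleGraph.cycleGraph (k + 3)) S ∧ 0 ∉ S ∧ 1 ∉ S}.ncard ≤
      #(blockWords k) := by
  rw [← Set.ncard_coe_finset]
  have key : ∀ S, IsMaxIndepSet (SimpleGraph.cycleGraph (k + 3)) S → 0 ∉ S → 1 ∉ S →
      cyclicIndicator S 2 = true ∧ cyclicIndicator S (2 + k) = true ∧
      (List.range' 2 (k + 3)).map (cyclicIndicator S) =
        (List.range' 2 k).map (cyclicIndicator S) ++ [true, false, false] := by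
    intro S hS h0 h1
    have f0 : cyclicIndicator S 0 = false :=
      cyclicIndicator_eq_false.2 (by rwa [Nat.cast_zero])
    have f1 : cyclicIndicator S 1 = false :=
      cyclicIndicator_eq_false.2 (by rwa [Nat.cast_one])
    have f3 : cyclicIndicator S (k + 3) = false := by
      have := cyclicIndicator_add_self S 0
      rwa [zero_add, f0] at this
    have f4 : cyclicIndicator S (k + 3 + 1) = false := by
      rw [show k + 3 + 1 = 1 + (k + 3) by ring, cyclicIndicator_add_self, f1]
    have f2 : cyclicIndicator S (k + 2) = true := by
      by_contra h
      simpa [f4] using hS.cyclicIndicator_add_two_eq_true (Bool.of_not_eq_true h) f3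
    refine ⟨hS.cyclicIndicator_add_two_eq_true f0 f1, by rwa [Nat.add_comm 2 k], ?_⟩
    rw [← List.range'_append_1, List.map_append]
    simp [List.range'_succ, add_comm 2 k, f2, f3, f4]
  refine Set.ncard_le_ncard_of_injOn (fun S => (List.range' 2 k).map (cyclicIndicator S)) ?_ ?_
  · rintro S ⟨hS, h0, h1⟩
    obtain ⟨h2, h2k, -⟩ := key S hS h0 h1
    exact hS.map_range'_cyclicIndicator_mem_blockWords h2 h2k
  · rintro S ⟨hS, hS0, hS1⟩ T ⟨hT, hT0, hT1⟩ hST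
    apply injective_map_range'_cyclicIndicator (s := 2) (by omega)
    simp only [(key S hS hS0 hS1).2.2, (key T hT hT0 hT1).2.2, hST]

theorem mis_cycleGraph_le_card_blockWords (k : ℕ) :
    mis (SimpleGraph.cycleGraph (k + 3)) ≤ 2 * #(blockWords (k + 3)) + #(blockWords k) := by
  set G := SimpleGraph.cycleGraph (k + 3)
  set A₀ := {S | IsMaxIndepSet G S ∧ ((0 : ℕ) : Fin (k + 3)) ∈ S}
  set A₁ := {S | IsMaxIndepSet G S ∧ ((1 : ℕ) : Fin (k + 3)) ∈ S}
  set A₂ := {S | IsMaxIndepSet G S ∧ 0 ∉ S ∧ 1 ∉ S}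
  have hcover : {S | IsMaxIndepSet G S} ⊆ A₀ ∪ A₁ ∪ A₂ := by
    intro S hS
    by_cases h0 : (0 : Fin (k + 3)) ∈ S
    · exact Or.inl (Or.inl ⟨hS, by rwa [Nat.cast_zero]⟩)
    by_cases h1 : (1 : Fin (k + 3)) ∈ S
    · exact Or.inl (Or.inr ⟨hS, by rwa [Nat.cast_one]⟩)
    · exact Or.inr ⟨hS, h0, h1⟩
  have h₀ : A₀.ncard ≤ #(blockWords (k + 3)) := ncard_maxIndepSet_cycleGraph_mem_le (by omega)
  have h₁ : A₁.ncard ≤ #(blockWords (k + 3)) := ncard_maxIndepSet_cycleGraph_mem_le (by omega)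
  have h₂ : A₂.ncard ≤ #(blockWords k) := ncard_maxIndepSet_cycleGraph_zero_one_notMem_le k
  calc mis G = {S | IsMaxIndepSet G S}.ncard := Nat.card_coe_set_eq _
    _ ≤ (A₀ ∪ A₁ ∪ A₂).ncard := Set.ncard_le_ncard hcover
    _ ≤ A₀.ncard + A₁.ncard + A₂.ncard :=
      (Set.ncard_union_le _ _).trans (Nat.add_le_add_right (Set.ncard_union_le _ _) _)
    _ ≤ 2 * #(blockWords (k + 3)) + #(blockWords k) := by omega

theorem le_mul_pow_of_le_add_of_one_add_eq_pow_three {γ C : ℝ} (hγ : 1 + γ = γ ^ 3)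
    {a : ℕ → ℝ} (hrec : ∀ k, a (k + 3) ≤ a (k + 1) + a k)
    (h0 : a 0 ≤ C) (h1 : a 1 ≤ C * γ) (h2 : a 2 ≤ C * γ ^ 2) (k : ℕ) : a k ≤ C * γ ^ k := by
  induction k using Nat.strong_induction_on with
  | _ k ih =>
    match k with
    | 0 => simpa using h0
    | 1 => simpa using h1
    | 2 => exact h2
    | k + 3 =>
      calc a (k + 3) ≤ C * γ ^ (k + 1) + C * γ ^ k :=
            (hrec k).trans (add_le_add (ih (k + 1) (by omega)) (ih k (by omega)))
        _ = C * γ ^ k * (1 + γ) := by ring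
        _ = C * γ ^ (k + 3) := by rw [hγ]; ring

theorem mis_cycleGraph_le (γ : ℝ) (hγ : 1 + γ = γ ^ 3) (n : ℕ) (hn : 3 ≤ n) :
    (mis (SimpleGraph.cycleGraph n) : ℝ) ≤ 3 * γ ^ (n - 3) := by
  obtain ⟨k, rfl⟩ : ∃ k, n = k + 3 := ⟨n - 3, by omega⟩
  have hγ_ge : 13 / 10 ≤ γ := by
    nlinarith [sq_nonneg (γ + 13 / 20), sq_nonneg (γ - 13 / 10)]
  have hrec (m : ℕ) : (2 * #(blockWords (m + 6)) + #(blockWords (m + 3)) : ℝ) ≤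
      (2 * #(blockWords (m + 4)) + #(blockWords (m + 1))) +
        (2 * #(blockWords (m + 3)) + #(blockWords m)) := by
    have h6 : #(blockWords (m + 6)) ≤ #(blockWords (m + 4)) + #(blockWords (m + 3)) :=
      card_blockWords_add_three_le (m + 3)
    have h3 := card_blockWords_add_three_le m
    norm_cast
    omega
  have hb : #(blockWords 3) = 1 ∧ #(blockWords 4) = 1 ∧ #(blockWords 5) = 2 := by decide
  have hbound := le_mul_pow_of_le_add_of_one_add_eq_pow_three hγ
    (a := fun k => (2 * #(blockWords (k + 3)) + #(blockWords k) : ℝ)) (C := 3) hrec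
    (by norm_num [hb, blockWords]) (by norm_num [hb, blockWords]; nlinarith)
    (by norm_num [hb, blockWords]; nlinarith) k
  rw [Nat.add_sub_cancel]
  exact le_trans (by exact_mod_cast mis_cycleGraph_le_card_blockWords k) hbound
end

section
/- (Moon–Moser) Every graph G on n vertices satisfies mis(G) ≤ 3^{n/3}, with equality if and only if n is divisible by 3 and G is the vertex-disjoint union of n/3 triangles. -/
section MoonMoserAux

variable {V : Type*}

lemma indep_insert {G : SimpleGraph V} {s : Set V} {w : V}
    (hs : IsIndepSet G s) (hw : ∀ x ∈ s, ¬ G.Adj w x) :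
    IsIndepSet G (insert w s) := by
  intro x hx y hy hadj
  rcases hx with rfl | hx
  · rcases hy with rfl | hy
    · exact G.irrefl hadj
    · exact hw y hy hadj
  · rcases hy with rfl | hy
    · exact hw x hx hadj.symm
    · exact hs hx hy hadj

lemma isMaxIndepSet_iff {G : SimpleGraph V} {s : Set V} :
    IsMaxIndepSet G s ↔ IsIndepSet G s ∧ ∀ w, w ∉ s → ∃ x ∈ s, G.Adj w x := by
  constructor
  · rintro ⟨h1, h2⟩
    refine ⟨h1, fun w hw => ?_⟩
    by_contra hc
    push_neg at hc
    have := h2 _ (indep_insert h1 hc) (Set.subset_insert _ _)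
    exact hw (this ▸ Set.mem_insert w s)
  · rintro ⟨h1, h2⟩
    refine ⟨h1, fun t ht hst => ?_⟩
    apply Set.Subset.antisymm hst
    intro x hx
    by_contra hxs
    obtain ⟨y, hy, hadj⟩ := h2 x hxs
    exact ht hx (hst hy) hadj

lemma exists_maxIndepSet [Fintype V] (G : SimpleGraph V) {s : Set V}
    (hs : IsIndepSet G s) : ∃ t, s ⊆ t ∧ IsMaxIndepSet G t := by
  classical
  have hfin : {t : Set V | s ⊆ t ∧ IsIndepSet G t}.Finite := Set.toFinite _
  obtain ⟨t, ⟨hst, hti⟩, hmax⟩ := Set.Finite.exists_maximalFor (fun t => t.ncard) _ hfin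
    ⟨s, Set.Subset.rfl, hs⟩
  refine ⟨t, hst, hti, fun t' ht' htt' => ?_⟩
  have h1 : t.ncard ≤ t'.ncard := Set.ncard_le_ncard htt' (Set.toFinite _)
  have h2 := hmax (⟨hst.trans htt', ht'⟩ : s ⊆ t' ∧ IsIndepSet G t') h1
  exact Set.eq_of_subset_of_ncard_le htt' h2.ge (Set.toFinite _)

lemma card_maxIndep_mem (G : SimpleGraph V) (u : V) (c : Set V)
    (hc : c = {w | ¬ (w = u ∨ G.Adj u w)}) :
    Nat.card {S : Set V // IsMaxIndepSet G S ∧ u ∈ S} = mis (G.induce c) := by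
  subst hc
  apply Nat.card_congr
  set c : Set V := {w | ¬ (w = u ∨ G.Adj u w)} with hc
  have hmemc : ∀ w, w ∈ c ↔ w ≠ u ∧ ¬ G.Adj u w := by
    intro w; simp [hc]
  refine ⟨fun S => ⟨{x : c | (x : V) ∈ S.1}, ?_⟩,
          fun T => ⟨insert u (Subtype.val '' T.1), ?_, Set.mem_insert _ _⟩, ?_, ?_⟩
  · -- forward: restriction is a max indep set of the induced graph
    obtain ⟨S, ⟨hSi, hSmax⟩, huS⟩ := S
    rw [isMaxIndepSet_iff]
    constructor
    · intro x hx y hy hadj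
      exact hSi hx hy hadj
    · intro x hx
      obtain ⟨s, hsS, hadj⟩ := (isMaxIndepSet_iff.mp ⟨hSi, hSmax⟩).2 x hx
      have hsc : s ∈ c := by
        rw [hmemc]
        refine ⟨?_, hSi huS hsS⟩
        rintro rfl
        exact ((hmemc _).mp x.2).2 hadj.symm
      exact ⟨⟨s, hsc⟩, hsS, hadj⟩
  · -- backward: insert u (image) is a max indep set of G
    obtain ⟨T, hTi, hTmax⟩ := T
    rw [isMaxIndepSet_iff]
    constructor
    · intro x hx y hy hadj
      rcases hx with rfl | ⟨x', hx', rfl⟩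
      · rcases hy with rfl | ⟨y', hy', rfl⟩
        · exact G.irrefl hadj
        · exact ((hmemc _).mp y'.2).2 hadj
      · rcases hy with rfl | ⟨y', hy', rfl⟩
        · exact ((hmemc _).mp x'.2).2 hadj.symm
        · exact hTi hx' hy' hadj
    · intro w hw
      have hwu : w ≠ u := fun h => hw (h ▸ Set.mem_insert _ _)
      by_cases hadj : G.Adj u w
      · exact ⟨u, Set.mem_insert _ _, hadj.symm⟩
      · have hwc : w ∈ c := (hmemc _).mpr ⟨hwu, hadj⟩
        have hwT : (⟨w, hwc⟩ : c) ∉ T := fun h =>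
          hw (Set.mem_insert_iff.mpr (Or.inr ⟨_, h, rfl⟩))
        obtain ⟨y, hyT, hyadj⟩ := (isMaxIndepSet_iff.mp ⟨hTi, hTmax⟩).2 _ hwT
        exact ⟨y, Set.mem_insert_iff.mpr (Or.inr ⟨y, hyT, rfl⟩), hyadj⟩
  · -- left inverse
    rintro ⟨S, ⟨hSi, hSmax⟩, huS⟩
    apply Subtype.ext
    simp only
    apply Set.Subset.antisymm
    · intro s hs
      rcases hs with rfl | ⟨x, hx, rfl⟩
      · exact huS
      · exact hx
    · intro s hs
      by_cases hsu : s = u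
      · exact hsu ▸ Set.mem_insert _ _
      · have hsc : s ∈ c := (hmemc _).mpr ⟨hsu, fun h => hSi huS hs h⟩
        exact Set.mem_insert_iff.mpr (Or.inr ⟨⟨s, hsc⟩, hs, rfl⟩)
  · -- right inverse
    rintro ⟨T, hT⟩
    apply Subtype.ext
    simp only
    ext x
    simp only [Set.mem_setOf_eq, Set.mem_insert_iff]
    constructor
    · rintro (h | ⟨y, hy, hyx⟩)
      · exact absurd h ((hmemc _).mp x.2).1
      · rwa [show y = x from Subtype.ext hyx] at hy
    · intro hx
      exact Or.inr ⟨x, hx, rfl⟩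

open Finset in
lemma mis_count [Fintype V] (G : SimpleGraph V) (t : Finset V)
    (hcover : ∀ S : Set V, IsMaxIndepSet G S → ∃ u ∈ t, u ∈ S) :
    (mis G ≤ ∑ u ∈ t, Nat.card {S : Set V // IsMaxIndepSet G S ∧ u ∈ S}) ∧
    ((∀ x ∈ t, ∀ y ∈ t, x ≠ y → G.Adj x y) →
      mis G = ∑ u ∈ t, Nat.card {S : Set V // IsMaxIndepSet G S ∧ u ∈ S}) ∧
    (mis G = (∑ u ∈ t, Nat.card {S : Set V // IsMaxIndepSet G S ∧ u ∈ S}) →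
      ∀ S : Set V, IsMaxIndepSet G S → ∀ x ∈ t, ∀ y ∈ t, x ∈ S → y ∈ S → x = y) := by
  classical
  letI : Fintype (Set V) := Fintype.ofFinite _
  set M : Finset (Set V) := Finset.univ.filter (fun S => IsMaxIndepSet G S) with hM
  have hmis : mis G = M.card := by
    rw [mis, Nat.card_eq_fintype_card, Fintype.card_subtype]
  have hAt : ∀ u : V, Nat.card {S : Set V // IsMaxIndepSet G S ∧ u ∈ S}
      = (M.filter (fun S => u ∈ S)).card := by
    intro u
    rw [Nat.card_eq_fintype_card, Fintype.card_subtype, hM, Finset.filter_filter]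
  have hswap : (∑ u ∈ t, Nat.card {S : Set V // IsMaxIndepSet G S ∧ u ∈ S})
      = ∑ S ∈ M, (t.filter (fun u => u ∈ S)).card := by
    simp only [hAt, Finset.card_filter]
    rw [Finset.sum_comm]
  have hMmem : ∀ S ∈ M, IsMaxIndepSet G S := by
    intro S hS; rw [hM, Finset.mem_filter] at hS; exact hS.2
  have hpos : ∀ S ∈ M, 1 ≤ (t.filter (fun u => u ∈ S)).card := by
    intro S hS
    obtain ⟨u, hu, huS⟩ := hcover S (hMmem S hS)
    exact Finset.card_pos.mpr ⟨u, Finset.mem_filter.mpr ⟨hu, huS⟩⟩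
  refine ⟨?_, ?_, ?_⟩
  · rw [hmis, hswap]
    calc M.card = ∑ _S ∈ M, 1 := by simp
    _ ≤ _ := Finset.sum_le_sum hpos
  · intro hclique
    rw [hmis, hswap]
    have : ∀ S ∈ M, (t.filter (fun u => u ∈ S)).card = 1 := by
      intro S hS
      refine le_antisymm ?_ (hpos S hS)
      apply Finset.card_le_one.mpr
      intro a ha b hb
      rw [Finset.mem_filter] at ha hb
      by_contra hab
      exact (hMmem S hS).1 ha.2 hb.2 (hclique a ha.1 b hb.1 hab)
    rw [Finset.sum_congr rfl this]
    simp
  · intro heq S hS x hx y hy hxS hyS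
    by_contra hxy
    have hSM : S ∈ M := by rw [hM, Finset.mem_filter]; exact ⟨Finset.mem_univ _, hS⟩
    have h2 : 2 ≤ (t.filter (fun u => u ∈ S)).card := by
      apply Finset.one_lt_card.mpr
      exact ⟨x, Finset.mem_filter.mpr ⟨hx, hxS⟩, y, Finset.mem_filter.mpr ⟨hy, hyS⟩, hxy⟩
    have hlt : (∑ _S ∈ M, 1) < ∑ S ∈ M, (t.filter (fun u => u ∈ S)).card := by
      apply Finset.sum_lt_sum hpos
      exact ⟨S, hSM, by omega⟩
    rw [heq, hswap] at hmis
    simp only [Finset.sum_const, smul_eq_mul, mul_one] at hlt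
    omega

lemma cube_lt_pow {k : ℕ} (hk : 4 ≤ k) : k ^ 3 < 3 ^ k := by
  induction k, hk using Nat.le_induction with
  | base => norm_num
  | succ k hk ih =>
    have h1 : (k + 1) ^ 3 ≤ 2 * k ^ 3 := by
      have a1 : 4 * (k * k) ≤ k * (k * k) := Nat.mul_le_mul_right _ hk
      have a2 : 4 * k ≤ k * k := Nat.mul_le_mul_right _ hk
      nlinarith [a1, a2, hk]
    have h2 : 2 * 3 ^ k < 3 ^ (k + 1) := by
      rw [pow_succ]
      have : 1 ≤ 3 ^ k := Nat.one_le_pow _ _ (by norm_num)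
      omega
    omega

lemma cube_le_pow (k : ℕ) : k ^ 3 ≤ 3 ^ k ∧ (k ^ 3 = 3 ^ k ↔ k = 3) := by
  rcases lt_or_ge k 4 with h | h
  · interval_cases k <;> norm_num
  · have := cube_lt_pow h
    omega

lemma rpow_cube (x : ℝ) : ((3:ℝ) ^ (x / 3)) ^ (3:ℕ) = 3 ^ x := by
  rw [← Real.rpow_natCast ((3:ℝ) ^ (x/3)) 3, ← Real.rpow_mul (by norm_num)]
  norm_num

lemma rpow_pos3 (x : ℝ) : (0:ℝ) < 3 ^ x := Real.rpow_pos_of_pos (by norm_num) x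

lemma key_numeric (k : ℕ) :
    (k : ℝ) ≤ 3 ^ ((k : ℝ) / 3) ∧ ((k : ℝ) = 3 ^ ((k : ℝ) / 3) ↔ k = 3) := by
  have hc := cube_le_pow k
  have hcube : ((k:ℝ)) ^ (3:ℕ) ≤ ((3:ℝ) ^ ((k:ℝ) / 3)) ^ (3:ℕ) := by
    rw [rpow_cube, Real.rpow_natCast]
    exact_mod_cast hc.1
  have h0 : (0:ℝ) ≤ (k:ℝ) := Nat.cast_nonneg k
  have h1 : (0:ℝ) ≤ 3 ^ ((k:ℝ)/3) := (rpow_pos3 _).le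
  constructor
  · exact (pow_le_pow_iff_left₀ h0 h1 (by norm_num)).mp hcube
  · constructor
    · intro h
      have : ((k:ℝ)) ^ (3:ℕ) = ((3:ℝ) ^ ((k:ℝ) / 3)) ^ (3:ℕ) := congrArg (· ^ (3:ℕ)) h
      rw [rpow_cube, Real.rpow_natCast] at this
      have : (k:ℝ)^3 = (3:ℝ)^k := by exact_mod_cast this
      have : k ^ 3 = 3 ^ k := by exact_mod_cast this
      exact hc.2.mp this
    · rintro rfl
      norm_num

end MoonMoserAux

universe u

def MMExt {V : Type u} (G : SimpleGraph V) : Prop :=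
  ∀ v : V, ∃ y z : V, G.Adj v y ∧ G.Adj v z ∧ G.Adj y z ∧
    ∀ w : V, G.Adj v w → w = y ∨ w = z

lemma rpow3_mono {x y : ℝ} (h : x ≤ y) : (3:ℝ) ^ x ≤ 3 ^ y :=
  Real.rpow_le_rpow_left_iff (by norm_num : (1:ℝ) < 3) |>.mpr h

lemma rpow3_le_iff {x y : ℝ} : (3:ℝ) ^ x ≤ 3 ^ y ↔ x ≤ y :=
  Real.rpow_le_rpow_left_iff (by norm_num : (1:ℝ) < 3)

theorem mm_main : ∀ n : ℕ, ∀ (V : Type u) [Fintype V] (G : SimpleGraph V),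
    Fintype.card V = n →
    ((mis G : ℝ) ≤ 3 ^ ((n : ℝ) / 3)) ∧
    ((mis G : ℝ) = 3 ^ ((n : ℝ) / 3) ↔ 3 ∣ n ∧ MMExt G) := by
  intro n
  induction n using Nat.strong_induction_on with
  | _ n ih =>
  intro V _ G hcard
  rcases Nat.eq_zero_or_pos n with rfl | hn
  · -- base case n = 0
    have hempty : IsEmpty V := Fintype.card_eq_zero_iff.mp hcard
    have hmis : mis G = 1 := by
      have hun : ∀ s : Set V, s = ∅ := fun s =>
        Set.eq_empty_of_forall_notMem (fun x _ => hempty.elim x)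
      have hM : IsMaxIndepSet G ∅ :=
        ⟨fun x hx => absurd hx (Set.notMem_empty x), fun t _ _ => (hun t).symm⟩
      haveI : Unique {s : Set V // IsMaxIndepSet G s} :=
        ⟨⟨⟨∅, hM⟩⟩, fun s => Subtype.ext ((hun s.1).trans rfl)⟩
      rw [mis, Nat.card_unique]
    have h1 : (3:ℝ) ^ (((0:ℕ):ℝ)/3) = 1 := by norm_num
    rw [hmis, h1]
    simp only [Nat.cast_one]
    refine ⟨le_refl 1, ?_, ?_⟩
    · intro _
      exact ⟨⟨0, rfl⟩, fun v => hempty.elim v⟩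
    · intro _
      trivial
  · -- inductive case n ≥ 1
    have hne : Nonempty V := Fintype.card_pos_iff.mp (by omega)
    classical
    set d : V → ℕ := fun x => (G.neighborSet x).ncard with hd
    obtain ⟨v, -, hvmin'⟩ := Finset.exists_min_image Finset.univ d ⟨hne.some, Finset.mem_univ _⟩
    have hvmin : ∀ x : V, d v ≤ d x := fun x => hvmin' x (Finset.mem_univ x)
    have hNfin : ∀ u : V, (insert u (G.neighborSet u)).Finite := fun u => Set.toFinite _
    set N : V → Finset V := fun u => (hNfin u).toFinset with hN
    have hmemN : ∀ u w, w ∈ N u ↔ (w = u ∨ G.Adj u w) := by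
      intro u w
      rw [hN]
      simp only [Set.Finite.mem_toFinset, Set.mem_insert_iff, SimpleGraph.mem_neighborSet]
    have hcardN : ∀ u, (N u).card = d u + 1 := by
      intro u
      have h1 : (insert u (G.neighborSet u)).ncard = (N u).card := by
        rw [hN]; exact Set.ncard_eq_toFinset_card _ (hNfin u)
      rw [← h1, Set.ncard_insert_of_notMem (by simp) (Set.toFinite _)]
    have hdn : ∀ u : V, d u + 1 ≤ n := by
      intro u
      rw [← hcardN u, ← hcard]
      exact Finset.card_le_univ _
    set c : V → Set V := fun u => {w | ¬ (w = u ∨ G.Adj u w)} with hc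
    have hcardc : ∀ u : V, Nat.card (c u) = n - (d u + 1) := by
      intro u
      have h1 : c u = (↑(N u) : Set V)ᶜ := by
        ext w; simp [hc, hmemN u w]
      rw [Nat.card_coe_set_eq, h1]
      have h2 := Set.ncard_add_ncard_compl (↑(N u) : Set V) (Set.toFinite _) (Set.toFinite _)
      rw [Set.ncard_coe_finset, hcardN u, Nat.card_eq_fintype_card, hcard] at h2
      omega
    set misAt : V → ℕ := fun u => Nat.card {S : Set V // IsMaxIndepSet G S ∧ u ∈ S} with hmisAt
    have hAt : ∀ u : V, misAt u = mis (G.induce (c u)) := fun u =>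
      card_maxIndep_mem G u (c u) rfl
    have hcards : ∀ u : V, Fintype.card (c u) = n - (d u + 1) := by
      intro u; rw [← Nat.card_eq_fintype_card, hcardc u]
    have hcover : ∀ S : Set V, IsMaxIndepSet G S → ∃ u ∈ N v, u ∈ S := by
      intro S hS
      by_cases hvS : v ∈ S
      · exact ⟨v, (hmemN v v).mpr (Or.inl rfl), hvS⟩
      · obtain ⟨x, hxS, hadj⟩ := (isMaxIndepSet_iff.mp hS).2 v hvS
        exact ⟨x, (hmemN v x).mpr (Or.inr hadj), hxS⟩
    obtain ⟨hle, hcliq, hdisj⟩ := mis_count G (N v) hcover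
    have hBu : ∀ u : V, (mis (G.induce (c u)) : ℝ) ≤ 3 ^ ((↑(n - (d u + 1)) : ℝ) / 3) :=
      fun u => (ih (n - (d u + 1)) (by have := hdn u; omega) (c u) (G.induce (c u)) (hcards u)).1
    set A : ℝ := 3 ^ (((n : ℝ) - (d v + 1)) / 3) with hA
    have hcast : ∀ u : V, ((n - (d u + 1) : ℕ) : ℝ) = (n : ℝ) - ((d u : ℝ) + 1) := by
      intro u; rw [Nat.cast_sub (hdn u)]; push_cast; ring
    have hAu : ∀ u : V, (misAt u : ℝ) ≤ A := by
      intro u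
      rw [hAt u]
      refine (hBu u).trans ?_
      rw [hA]
      apply rpow3_mono
      rw [hcast u]
      have h1 : (d v : ℝ) ≤ d u := Nat.cast_le.mpr (hvmin u)
      have : ((d v : ℝ) + 1) ≤ (d u : ℝ) + 1 := by linarith
      have h3 : ((n:ℝ) - ((d u:ℝ)+1)) ≤ (n:ℝ) - ((d v:ℝ)+1) := by linarith
      push_cast
      linarith
    have hsumle : ((∑ u ∈ N v, misAt u : ℕ) : ℝ) ≤ ((d v : ℝ) + 1) * A := by
      push_cast
      calc ∑ u ∈ N v, (misAt u : ℝ) ≤ ∑ u ∈ N v, A := Finset.sum_le_sum (fun u _ => hAu u)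
      _ = ((N v).card : ℝ) * A := by rw [Finset.sum_const, nsmul_eq_mul]
      _ = _ := by rw [hcardN v]; push_cast; ring
    have hdv1 : ((d v : ℝ) + 1) ≤ 3 ^ (((d v : ℝ) + 1) / 3) := by
      have := (key_numeric (d v + 1)).1
      push_cast at this
      exact this
    have hsplit : (3:ℝ) ^ (((d v : ℝ) + 1) / 3) * A = 3 ^ ((n:ℝ)/3) := by
      rw [hA, ← Real.rpow_add (by norm_num)]
      congr 1
      ring
    have hApos : (0:ℝ) < A := rpow_pos3 _
    have hmain_le : (mis G : ℝ) ≤ 3 ^ ((n:ℝ)/3) := by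
      calc (mis G : ℝ) ≤ ((∑ u ∈ N v, misAt u : ℕ) : ℝ) := Nat.cast_le.mpr hle
      _ ≤ ((d v : ℝ) + 1) * A := hsumle
      _ ≤ 3 ^ (((d v : ℝ) + 1)/3) * A := mul_le_mul_of_nonneg_right hdv1 hApos.le
      _ = _ := hsplit
    refine ⟨hmain_le, ?_, ?_⟩
    · -- forward direction: equality implies structure
      intro hEq
      have hcastle : (mis G : ℝ) ≤ ((∑ u ∈ N v, misAt u : ℕ) : ℝ) := Nat.cast_le.mpr hle
      have hchain2 : ((∑ u ∈ N v, misAt u : ℕ) : ℝ) ≤ 3 ^ ((n:ℝ)/3) := by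
        calc ((∑ u ∈ N v, misAt u : ℕ) : ℝ) ≤ ((d v : ℝ) + 1) * A := hsumle
        _ ≤ 3 ^ (((d v : ℝ) + 1)/3) * A := mul_le_mul_of_nonneg_right hdv1 hApos.le
        _ = _ := hsplit
      have hsum_eq : (mis G : ℝ) = ((∑ u ∈ N v, misAt u : ℕ) : ℝ) := by linarith
      have hnat_eq : mis G = ∑ u ∈ N v, misAt u := Nat.cast_inj.mp hsum_eq
      have hdvA : ((d v:ℝ)+1) * A = 3 ^ (((d v:ℝ)+1)/3) * A := by
        have h3 : 3 ^ ((n:ℝ)/3) ≤ ((d v:ℝ)+1) * A := by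
          rw [← hEq, hsum_eq]; exact hsumle
        have h2 : ((d v:ℝ)+1) * A ≤ 3 ^ (((d v:ℝ)+1)/3) * A :=
          mul_le_mul_of_nonneg_right hdv1 hApos.le
        rw [hsplit] at h2 ⊢
        linarith
      have hdv3 : d v = 2 := by
        have h4 : ((d v:ℝ)+1) = 3 ^ (((d v:ℝ)+1)/3) :=
          mul_right_cancel₀ (ne_of_gt hApos) hdvA
        have h4' : ((d v + 1 : ℕ):ℝ) = 3 ^ (((d v + 1:ℕ):ℝ)/3) := by push_cast; exact h4
        have h5 := (key_numeric (d v + 1)).2.mp h4'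
        omega
      have hAu_eq : ∀ u ∈ N v, (misAt u : ℝ) = A := by
        intro u hu
        by_contra hne'
        have hlt : (misAt u : ℝ) < A := lt_of_le_of_ne (hAu u) hne'
        have hstrict : (∑ x ∈ N v, (misAt x:ℝ)) < ∑ _x ∈ N v, A :=
          Finset.sum_lt_sum (fun i _ => hAu i) ⟨u, hu, hlt⟩
        rw [Finset.sum_const, nsmul_eq_mul, hcardN v] at hstrict
        have hl : (∑ x ∈ N v, (misAt x:ℝ)) = ((∑ x ∈ N v, misAt x : ℕ) : ℝ) := by push_cast; rfl
        have hr : ((d v + 1:ℕ):ℝ) * A = 3 ^ ((n:ℝ)/3) := by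
          rw [← hsplit, ← hdvA]; push_cast; ring
        rw [hl, ← hsum_eq, hEq, ← hr] at hstrict
        exact lt_irrefl _ hstrict
      have hdu2 : ∀ u ∈ N v, d u = 2 := by
        intro u hu
        have h1 : A ≤ 3 ^ ((↑(n - (d u + 1)) : ℝ)/3) := by
          rw [← hAu_eq u hu, hAt u]; exact hBu u
        rw [hA] at h1
        have h2 := rpow3_le_iff.mp h1
        rw [hcast u] at h2
        have h3 : (d u:ℝ) ≤ (d v:ℝ) := by linarith
        exact le_antisymm (by exact_mod_cast hdv3 ▸ h3) (hdv3 ▸ hvmin u)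
      have hsub : ∀ u ∈ N v, 3 ∣ (n - 3) ∧ MMExt (G.induce (c u)) := by
        intro u hu
        have e1 : ((n - (d u + 1) : ℕ):ℝ) = (n:ℝ) - 3 := by
          rw [hcast u, hdu2 u hu]; norm_num
        have hmu : (mis (G.induce (c u)) : ℝ) = 3 ^ ((((n - (d u + 1)) : ℕ):ℝ)/3) := by
          rw [← hAt u, hAu_eq u hu, hA, e1, hdv3]
          norm_num
        have hih := (ih (n - (d u + 1)) (by have := hdn u; omega) (c u)
          (G.induce (c u)) (hcards u)).2.mp hmu
        rwa [hdu2 u hu] at hih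
      have hvN : v ∈ N v := (hmemN v v).mpr (Or.inl rfl)
      have hnv2 : (G.neighborSet v).ncard = 2 := by rw [← hdv3, hd]
      obtain ⟨y, z, hyz, hpair⟩ := Set.ncard_eq_two.mp hnv2
      have hady : G.Adj v y := by
        have hy : y ∈ G.neighborSet v := by rw [hpair]; exact Set.mem_insert _ _
        exact hy
      have hadz : G.Adj v z := by
        have hz : z ∈ G.neighborSet v := by rw [hpair]; exact Set.mem_insert_iff.mpr (Or.inr rfl)
        exact hz
      have hyN : y ∈ N v := (hmemN v y).mpr (Or.inr hady)
      have hzN : z ∈ N v := (hmemN v z).mpr (Or.inr hadz)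
      have hpairfix : ∀ u a b : V, d u = 2 → G.Adj u a → G.Adj u b → a ≠ b →
          ∀ w, G.Adj u w → w = a ∨ w = b := by
        intro u a b hdu ha hb hab w hw
        have hsubp : ({a, b} : Set V) ⊆ G.neighborSet u := by
          intro x hx
          rcases hx with rfl | hx
          · exact ha
          · rw [Set.mem_singleton_iff] at hx; subst hx; exact hb
        have heqp : ({a,b} : Set V) = G.neighborSet u := by
          apply Set.eq_of_subset_of_ncard_le hsubp
          rw [Set.ncard_pair hab]
          have : (G.neighborSet u).ncard = d u := by rw [hd]
          omega
        have hw' : w ∈ G.neighborSet u := hw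
        rw [← heqp] at hw'
        rcases hw' with rfl | hw'
        · exact Or.inl rfl
        · rw [Set.mem_singleton_iff] at hw'; exact Or.inr hw'
      have hyzadj : G.Adj y z := by
        by_contra hnadj
        have hind : IsIndepSet G {y, z} := by
          intro a ha b hb hab
          rcases ha with rfl | ha
          · rcases hb with rfl | hb
            · exact G.irrefl hab
            · rw [Set.mem_singleton_iff] at hb; subst hb; exact hnadj hab
          · rw [Set.mem_singleton_iff] at ha; subst ha
            rcases hb with rfl | hb
            · exact hnadj hab.symm
            · rw [Set.mem_singleton_iff] at hb; subst hb; exact G.irrefl hab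
        obtain ⟨T, hT, hTmax⟩ := exists_maxIndepSet G hind
        have hyT : y ∈ T := hT (Set.mem_insert _ _)
        have hzT : z ∈ T := hT (Set.mem_insert_iff.mpr (Or.inr rfl))
        exact hyz (hdisj hnat_eq T hTmax y hyN z hzN hyT hzT)
      have hdy : d y = 2 := hdu2 y hyN
      have hdz : d z = 2 := hdu2 z hzN
      have hvnb : ∀ w, G.Adj v w → w = y ∨ w = z := hpairfix v y z hdv3 hady hadz hyz
      have hynb : ∀ w, G.Adj y w → w = v ∨ w = z :=
        hpairfix y v z hdy hady.symm hyzadj (G.ne_of_adj hadz)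
      have hznb : ∀ w, G.Adj z w → w = v ∨ w = y :=
        hpairfix z v y hdz hadz.symm hyzadj.symm (G.ne_of_adj hady)
      constructor
      · obtain ⟨hdvd3, -⟩ := hsub v hvN
        have h3n : 3 ≤ n := by have := hdn v; omega
        omega
      · intro x
        by_cases hxv : x = v
        · subst hxv; exact ⟨y, z, hady, hadz, hyzadj, hvnb⟩
        by_cases hxy : x = y
        · subst hxy; exact ⟨v, z, hady.symm, hyzadj, hadz, hynb⟩
        by_cases hxz : x = z
        · subst hxz; exact ⟨v, y, hadz.symm, hyzadj.symm, hady, hznb⟩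
        have hxnadjv : ¬ G.Adj v x := by
          intro h
          rcases hvnb x h with rfl | rfl
          · exact hxy rfl
          · exact hxz rfl
        have hxc : x ∈ c v := by
          rw [hc]
          intro hcon
          rcases hcon with h | h
          · exact hxv h
          · exact hxnadjv h
        obtain ⟨-, hextc⟩ := hsub v hvN
        obtain ⟨y', z', ha1, ha2, ha3, hall⟩ := hextc ⟨x, hxc⟩
        refine ⟨(y' : V), (z' : V), ha1, ha2, ha3, ?_⟩
        intro w hw
        have hwc : w ∈ c v := by
          rw [hc]
          intro hcon
          rcases hcon with rfl | hvw
          · exact hxnadjv hw.symm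
          · rcases hvnb w hvw with rfl | rfl
            · rcases hynb x hw.symm with rfl | rfl
              · exact hxv rfl
              · exact hxz rfl
            · rcases hznb x hw.symm with rfl | rfl
              · exact hxv rfl
              · exact hxy rfl
        rcases hall ⟨w, hwc⟩ hw with h | h
        · exact Or.inl (congrArg Subtype.val h)
        · exact Or.inr (congrArg Subtype.val h)
    · -- backward direction: structure implies equality
      rintro ⟨hdvd, hext⟩
      obtain ⟨y, z, hady, hadz, hyzadj, hvnb⟩ := hext v
      have hyz : y ≠ z := G.ne_of_adj hyzadj
      have hvy : v ≠ y := G.ne_of_adj hady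
      have hvz : v ≠ z := G.ne_of_adj hadz
      have hynb : ∀ w, G.Adj y w → w = v ∨ w = z := by
        intro w hw
        obtain ⟨y1, z1, _, _, _, hball⟩ := hext y
        have hv' := hball v hady.symm
        have hz' := hball z hyzadj
        have hw' := hball w hw
        rcases hv' with h1 | h1 <;> rcases hz' with h2 | h2 <;> rcases hw' with h3 | h3 <;>
          first
            | exact absurd (h1.trans h2.symm) hvz
            | exact Or.inl (h3.trans h1.symm)
            | exact Or.inr (h3.trans h2.symm)
      have hznb : ∀ w, G.Adj z w → w = v ∨ w = y := by
        intro w hw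
        obtain ⟨y1, z1, _, _, _, hball⟩ := hext z
        have hv' := hball v hadz.symm
        have hz' := hball y hyzadj.symm
        have hw' := hball w hw
        rcases hv' with h1 | h1 <;> rcases hz' with h2 | h2 <;> rcases hw' with h3 | h3 <;>
          first
            | exact absurd (h1.trans h2.symm) hvy
            | exact Or.inl (h3.trans h1.symm)
            | exact Or.inr (h3.trans h2.symm)
      have hNv : ∀ w, w ∈ N v ↔ (w = v ∨ w = y ∨ w = z) := by
        intro w
        rw [hmemN]
        constructor
        · rintro (rfl | ha)
          · exact Or.inl rfl
          · rcases hvnb w ha with rfl | rfl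
            · exact Or.inr (Or.inl rfl)
            · exact Or.inr (Or.inr rfl)
        · rintro (rfl | rfl | rfl)
          · exact Or.inl rfl
          · exact Or.inr hady
          · exact Or.inr hadz
      have hcliquefact : ∀ a ∈ N v, ∀ b ∈ N v, a ≠ b → G.Adj a b := by
        intro a ha b hb hab
        rcases (hNv a).mp ha with rfl | rfl | rfl <;> rcases (hNv b).mp hb with rfl | rfl | rfl <;>
          first
            | exact absurd rfl hab
            | exact hady
            | exact hadz
            | exact hady.symm
            | exact hyzadj
            | exact hadz.symm
            | exact hyzadj.symm
      have heq := hcliq hcliquefact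
      have hcv : ∀ w, w ∈ c v ↔ ¬(w = v ∨ w = y ∨ w = z) := by
        intro w
        rw [hc]
        simp only [Set.mem_setOf_eq]
        constructor
        · intro h hcon
          apply h
          rcases hcon with rfl | rfl | rfl
          · exact Or.inl rfl
          · exact Or.inr hady
          · exact Or.inr hadz
        · intro h hcon
          apply h
          rcases hcon with rfl | ha
          · exact Or.inl rfl
          · rcases hvnb w ha with rfl | rfl
            · exact Or.inr (Or.inl rfl)
            · exact Or.inr (Or.inr rfl)
      have hAt' : ∀ u ∈ N v, misAt u = mis (G.induce (c v)) := by
        intro u hu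
        apply card_maxIndep_mem G u (c v)
        rcases (hNv u).mp hu with rfl | rfl | rfl
        · rw [hc]
        · ext w
          rw [hcv w, Set.mem_setOf_eq]
          constructor
          · intro h hcon
            apply h
            rcases hcon with rfl | ha
            · exact Or.inr (Or.inl rfl)
            · rcases hynb w ha with rfl | rfl
              · exact Or.inl rfl
              · exact Or.inr (Or.inr rfl)
          · intro h hcon
            apply h
            rcases hcon with rfl | rfl | rfl
            · exact Or.inr hady.symm
            · exact Or.inl rfl
            · exact Or.inr hyzadj
        · ext w
          rw [hcv w, Set.mem_setOf_eq]
          constructor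
          · intro h hcon
            apply h
            rcases hcon with rfl | ha
            · exact Or.inr (Or.inr rfl)
            · rcases hznb w ha with rfl | rfl
              · exact Or.inl rfl
              · exact Or.inr (Or.inl rfl)
          · intro h hcon
            apply h
            rcases hcon with rfl | rfl | rfl
            · exact Or.inr hadz.symm
            · exact Or.inr hyzadj.symm
            · exact Or.inl rfl
      have hNveq : N v = {v, y, z} := by
        ext w
        rw [hNv w]
        simp [Finset.mem_insert]
      have hcard3 : (N v).card = 3 := by
        rw [hNveq]
        rw [Finset.card_insert_of_notMem (by simp [hvy, hvz]),
          Finset.card_insert_of_notMem (by simp [hyz]), Finset.card_singleton]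
      have h3n : 3 ≤ n := by
        rw [← hcard3, ← hcard]
        exact Finset.card_le_univ _
      have hsum3 : ∑ u ∈ N v, misAt u = 3 * mis (G.induce (c v)) := by
        rw [Finset.sum_congr rfl hAt', Finset.sum_const, hcard3, smul_eq_mul]
      have hextc : MMExt (G.induce (c v)) := by
        rintro ⟨x, hx⟩
        obtain ⟨y0, z0, hb1, hb2, hb3, hball⟩ := hext x
        have hxprop := (hcv x).mp hx
        push_neg at hxprop
        have hmemc : ∀ w0, G.Adj x w0 → w0 ∈ c v := by
          intro w0 hw0
          rw [hcv]
          intro hcon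
          rcases hcon with rfl | rfl | rfl
          · rcases hvnb x hw0.symm with rfl | rfl
            · exact hxprop.2.1 rfl
            · exact hxprop.2.2 rfl
          · rcases hynb x hw0.symm with rfl | rfl
            · exact hxprop.1 rfl
            · exact hxprop.2.2 rfl
          · rcases hznb x hw0.symm with rfl | rfl
            · exact hxprop.1 rfl
            · exact hxprop.2.1 rfl
        refine ⟨⟨y0, hmemc y0 hb1⟩, ⟨z0, hmemc z0 hb2⟩, hb1, hb2, hb3, ?_⟩
        rintro ⟨w0, hw0⟩ hadw
        rcases hball w0 hadw with rfl | rfl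
        · exact Or.inl (Subtype.ext rfl)
        · exact Or.inr (Subtype.ext rfl)
      have hdv2 : d v = 2 := by
        have hns : G.neighborSet v = {y, z} := by
          ext w
          simp only [SimpleGraph.mem_neighborSet, Set.mem_insert_iff, Set.mem_singleton_iff]
          constructor
          · exact hvnb w
          · rintro (rfl | rfl)
            · exact hady
            · exact hadz
        rw [hd]
        simp only
        rw [hns, Set.ncard_pair hyz]
      have hcardcv : Fintype.card (c v) = n - 3 := by
        rw [hcards v, hdv2]
      have hdvd3 : 3 ∣ (n - 3) := by omega
      have hihres := (ih (n - 3) (by omega) (c v) (G.induce (c v)) hcardcv).2.mpr ⟨hdvd3, hextc⟩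
      have hmisr : (mis G : ℝ) = 3 * (mis (G.induce (c v)) : ℝ) := by
        rw [heq, hsum3]
        push_cast
        ring
      rw [hmisr, hihres]
      have hn3 : ((n - 3 : ℕ) : ℝ) = (n:ℝ) - 3 := by
        rw [Nat.cast_sub h3n]
        norm_num
      rw [hn3]
      have h313 : (3:ℝ) ^ ((3:ℝ)/3) = 3 := by
        norm_num
      calc (3:ℝ) * 3 ^ (((n:ℝ)-3)/3) = 3 ^ ((3:ℝ)/3) * 3 ^ (((n:ℝ)-3)/3) := by rw [h313]
      _ = 3 ^ ((3:ℝ)/3 + ((n:ℝ)-3)/3) := (Real.rpow_add (by norm_num) _ _).symm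
      _ = 3 ^ ((n:ℝ)/3) := by congr 1; ring

theorem moon_moser {V : Type*} [Fintype V] (G : SimpleGraph V) :
    (mis G : ℝ) ≤ 3 ^ ((Fintype.card V : ℝ) / 3) ∧
    ((mis G : ℝ) = 3 ^ ((Fintype.card V : ℝ) / 3) ↔
      3 ∣ Fintype.card V ∧
        ∀ v : V, ∃ y z : V, G.Adj v y ∧ G.Adj v z ∧ G.Adj y z ∧
          ∀ w : V, G.Adj v w → w = y ∨ w = z) := by
  exact mm_main (Fintype.card V) V G rfl
end
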